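/- In the regret game, every pure strategy Nash equilibrium is symmetric: there is no pure strategy Nash equilibrium a in which some player i chooses safe while another player j chooses risky. Consequently, the only candidate pure strategy Nash equilibria are the all-safe profile and the all-risky profile. -/

import Mathlib

namespace RegretGame

/-- An action in the regret game: choose the risky lottery or the safe lottery. -/
inductive Act : Type
  | risky : Act
  | safe : Act
deriving DecidableEq, Repr

/-- `numRisky a i` is the number of players other than `i` choosing the risky lottery
at the action profile `a`. -/
def numRisky {N : ℕ} (a : Fin N → Act) (i : Fin N) : ℕ :=
  (Finset.univ.filter (fun j => j ≠ i ∧ a j = Act.risky)).card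

/-- Player `i`'s expected payoff in the regret game at action profile `a`, given the
success probability `p`, coefficient of regret aversion `κ`, normalized good-state
payoff `v` of the risky lottery, and the information function `q` (the probability of
learning the risky outcome, as a function of how many of the others chose risky). -/
noncomputable def payoff {N : ℕ} (p κ v : ℝ) (q : ℕ → ℝ)
    (a : Fin N → Act) (i : Fin N) : ℝ :=
  if a i = Act.risky then p * v - (1 - p) * κ
  else 1 - p * q (numRisky a i) * κ * (v - 1)

/-- A pure strategy Nash equilibrium of the regret game: no player can strictly
increase her expected payoff by unilaterally changing her own action. -/
def IsNash {N : ℕ} (p κ v : ℝ) (q : ℕ → ℝ) (a : Fin N → Act) : Prop :=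
  ∀ (i : Fin N) (b : Act),
    payoff p κ v q (Function.update a i b) i ≤ payoff p κ v q a i

/-!
If player `i` plays safe and player `j` plays risky, `i` has one more risky opponent than `j`.
Neither wants to switch, so `1 - p q(mᵢ) κ (v - 1) ≥ p v - (1 - p) κ ≥ 1 - p q(mⱼ) κ (v - 1)`,
i.e. `q(mᵢ) ≤ q(mⱼ)` with `mⱼ < mᵢ`, against the strict monotonicity of `q`.
-/

open Function Finset

section numRisky

variable {N : ℕ}

lemma numRisky_update_self (a : Fin N → Act) (i : Fin N) (b : Act) :
    numRisky (update a i b) i = numRisky a i := by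
  unfold numRisky
  congr 1
  refine filter_congr fun k _ => ?_
  by_cases h : k = i <;> simp [h]

lemma numRisky_eq_card_erase (a : Fin N → Act) (i : Fin N) :
    numRisky a i = ((univ.filter (a · = Act.risky)).erase i).card := by
  unfold numRisky
  congr 1
  ext k
  simp

lemma numRisky_le (a : Fin N → Act) (i : Fin N) : numRisky a i ≤ N - 1 :=
  calc numRisky a i ≤ (univ.erase i).card := by
        rw [numRisky_eq_card_erase]
        exact card_le_card (erase_subset_erase _ (subset_univ _))
    _ = N - 1 := by simp

lemma numRisky_add_one_of_safe_of_risky {a : Fin N → Act} {i j : Fin N}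
    (hi : a i = Act.safe) (hj : a j = Act.risky) : numRisky a j + 1 = numRisky a i := by
  rw [numRisky_eq_card_erase a i, erase_eq_of_notMem (by simp [hi]),
    numRisky_eq_card_erase a j, card_erase_add_one (by simp [hj])]

end numRisky

section IsNash

variable {N : ℕ} {p κ v : ℝ} {q : ℕ → ℝ} {a : Fin N → Act}

lemma IsNash.risky_payoff_le (h : IsNash p κ v q a) {i : Fin N} (hi : a i = Act.safe) :
    p * v - (1 - p) * κ ≤ 1 - p * q (numRisky a i) * κ * (v - 1) := by
  simpa [payoff, hi] using h i Act.risky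

lemma IsNash.safe_payoff_le (h : IsNash p κ v q a) {j : Fin N} (hj : a j = Act.risky) :
    1 - p * q (numRisky a j) * κ * (v - 1) ≤ p * v - (1 - p) * κ := by
  simpa [payoff, hj, numRisky_update_self] using h j Act.safe

lemma IsNash.q_numRisky_le (h : IsNash p κ v q a) (hp : 0 < p) (hκ : 0 < κ) (hv : 1 < v)
    {i j : Fin N} (hi : a i = Act.safe) (hj : a j = Act.risky) :
    q (numRisky a i) ≤ q (numRisky a j) := by
  have hc : 0 < p * κ * (v - 1) := by have := sub_pos.mpr hv; positivity
  refine le_of_mul_le_mul_left ?_ hc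
  linarith [h.risky_payoff_le hi, h.safe_payoff_le hj]

lemma IsNash.not_exists_safe_risky (h : IsNash p κ v q a) (hp : 0 < p) (hκ : 0 < κ)
    (hv : 1 < v) (hq : ∀ m₁ m₂, m₁ < m₂ → m₂ ≤ N - 1 → q m₁ < q m₂) :
    ¬ ∃ i j : Fin N, a i = Act.safe ∧ a j = Act.risky := by
  rintro ⟨i, j, hi, hj⟩
  have hlt : numRisky a j < numRisky a i := by
    rw [← numRisky_add_one_of_safe_of_risky hi hj]
    exact Nat.lt_succ_self _
  exact (hq _ _ hlt (numRisky_le a i)).not_ge (h.q_numRisky_le hp hκ hv hi hj)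

end IsNash

lemma eq_const_of_not_exists_safe_risky {ι : Type*} {a : ι → Act}
    (h : ¬ ∃ i j, a i = Act.safe ∧ a j = Act.risky) :
    (a = fun _ => Act.safe) ∨ (a = fun _ => Act.risky) := by
  by_cases hs : ∀ k, a k = Act.safe
  · exact Or.inl (funext hs)
  · obtain ⟨j, hj⟩ := not_forall.mp hs
    have hjr : a j = Act.risky := by cases hj' : a j <;> simp_all
    refine Or.inr (funext fun k => ?_)
    cases hk : a k
    · rfl
    · exact absurd ⟨k, j, hk, hjr⟩ h

theorem regret_game_nash_symmetric_general
    (N : ℕ) (p κ v : ℝ)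
    (hp : 0 < p ∧ p < 1) (hκ : 0 < κ) (hv : 1 < v)
    (q : ℕ → ℝ)
    (hqmono : ∀ m₁ m₂, m₁ < m₂ → m₂ ≤ N - 1 → q m₁ < q m₂) :
    (∀ a : Fin N → Act, IsNash p κ v q a →
        ¬ ∃ i j : Fin N, a i = Act.safe ∧ a j = Act.risky) ∧
    (∀ a : Fin N → Act, IsNash p κ v q a →
        (a = fun _ : Fin N => Act.safe) ∨ (a = fun _ : Fin N => Act.risky)) := by
  have symmetric : ∀ a : Fin N → Act, IsNash p κ v q a →
      ¬ ∃ i j : Fin N, a i = Act.safe ∧ a j = Act.risky :=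
    fun a ha => ha.not_exists_safe_risky hp.1 hκ hv hqmono
  exact ⟨symmetric, fun a ha => eq_const_of_not_exists_safe_risky (symmetric a ha)⟩

/-- Every pure strategy Nash equilibrium of the regret game is symmetric: there is no
equilibrium in which some player chooses safe while another chooses risky; hence every
pure strategy Nash equilibrium is either the all-safe profile or the all-risky
profile. -/
theorem regret_game_nash_symmetric
    (N : ℕ) (hN : 2 ≤ N) (p κ v : ℝ)
    (hp : 0 < p ∧ p < 1) (hκ : 0 < κ) (hv : 1 < v)
    (q : ℕ → ℝ)
    (hq01 : ∀ m ≤ N - 1, 0 ≤ q m ∧ q m ≤ 1)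
    (hq0 : q 0 = 0) (hqN : q (N - 1) = 1)
    (hqmono : ∀ m₁ m₂, m₁ < m₂ → m₂ ≤ N - 1 → q m₁ < q m₂) :
    (∀ a : Fin N → Act, IsNash p κ v q a →
        ¬ ∃ i j : Fin N, a i = Act.safe ∧ a j = Act.risky) ∧
    (∀ a : Fin N → Act, IsNash p κ v q a →
        (a = fun _ : Fin N => Act.safe) ∨ (a = fun _ : Fin N => Act.risky)) :=
  regret_game_nash_symmetric_general N p κ v hp hκ hv q hqmono

end RegretGame
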